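/- Let C be a Cartan scheme and R a root system of type C. If a ∈ A and i, j ∈ I satisfy m_{i,j}^a = 3 (equivalently c^a_{ij} = c^a_{ji} = −1), then for all l ∈ I: c^{ρ_i(a)}_{il} + c^{ρ_i(a)}_{jl} = c^{ρ_iρ_j(a)}_{il} + c^{ρ_iρ_j(a)}_{jl}. -/

import Mathlib

/-- The standard basis vector `α i` of `ℤ^I`. -/
def alphaV {I : Type*} [DecidableEq I] (i : I) : I → ℤ := fun j => if j = i then 1 else 0

/-- The reflection `σ_i^a` on `ℤ^I`, determined by `σ_i^a(α_j) = α_j - c^a_{ij} α_i`. -/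
def reflMap {I A : Type*} [DecidableEq I] [Fintype I] (c : A → I → I → ℤ) (a : A) (i : I)
    (v : I → ℤ) : I → ℤ :=
  v - (∑ j, c a i j * v j) • alphaV i

/-- The set `R^a ∩ (ℕ_0 α_i + ℕ_0 α_j)`. -/
def coneIJ {I : Type*} [DecidableEq I] (R : Set (I → ℤ)) (i j : I) : Set (I → ℤ) :=
  R ∩ {v | ∃ p q : ℕ, v = (p : ℤ) • alphaV i + (q : ℤ) • alphaV j}

/-- Axioms (R1)–(R4) of a root system of type `𝒞`. -/
structure IsRootSystem {I A : Type*} [DecidableEq I] [Fintype I]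
    (ρ : I → A → A) (c : A → I → I → ℤ) (R : A → Set (I → ℤ)) : Prop where
  R1 : ∀ a, R a = {v ∈ R a | ∀ i, 0 ≤ v i} ∪ -{v ∈ R a | ∀ i, 0 ≤ v i}
  R2 : ∀ a i, R a ∩ {v | ∃ z : ℤ, v = z • alphaV i} = {alphaV i, -alphaV i}
  R3 : ∀ a i, (reflMap c a i) '' R a = R (ρ i a)
  R4 : ∀ a i j, i ≠ j → (coneIJ (R a) i j).Finite →
      ((ρ i ∘ ρ j)^[(coneIJ (R a) i j).ncard] a) = a

/-- Axioms of a Cartan scheme: `(C1)`, `(C2)` and generalized Cartan matrices. -/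
structure IsCartanScheme {I A : Type*} (ρ : I → A → A) (c : A → I → I → ℤ) : Prop where
  C1 : ∀ i a, ρ i (ρ i a) = a
  M1diag : ∀ a i, c a i i = 2
  M1off : ∀ a i j, i ≠ j → c a i j ≤ 0
  M2 : ∀ a i j, c a i j = 0 → c a j i = 0
  C2 : ∀ a i j, c a i j = c (ρ i a) i j

/-!
A reflection changes one coordinate only, so `σ_i^a` maps the roots of `R^a ∩ (ℕ₀α_i + ℕ₀α_j)`
other than `α_i` bijectively onto those at `ρ_i(a)`. Hence `m_{i,j}` is constant along the orbit
of `a`, and `m_{i,j} = 3` forces `c_{ij} = c_{ji} = -1` at each of its objects, the third root being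
`α_i + α_j`. By (R4), `ρ_iρ_jρ_i(a) = ρ_jρ_iρ_j(a) =: b`, so `P = σ_iσ_jσ_i 1_a` and
`Q = σ_jσ_iσ_j 1_a` both map `R^a` onto `R^b`. For `l ∉ {i, j}` and `v` equal to `α_l` off `{i, j}`,
`(P v)_j = X - v_i` and `(Q v)_j = Y - v_i`, where `-X` and `-Y` are the two sides of the claim.
The roots `z = Q⁻¹Pα_l` and `u = P⁻¹Qα_l` have `l`-coordinate `1`, so they are positive, and
`X = Y - z_i`, `Y = X - u_i` give `X = Y`.
-/

open Set

section CartanScheme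

variable {I A : Type*}

lemma rho_braid_of_iterate_eq_self {ρ : I → A → A} (hρ : ∀ k y, ρ k (ρ k y) = y) {i j : I} {x : A}
    (h : (ρ i ∘ ρ j)^[3] x = x) : ρ i (ρ j (ρ i x)) = ρ j (ρ i (ρ j x)) := by
  simpa [hρ] using (congrArg (fun y => ρ i (ρ j (ρ i y))) h).symm

variable [DecidableEq I]

lemma alphaV_self (i : I) : alphaV i i = 1 := by simp [alphaV]

lemma alphaV_of_ne {i m : I} (h : m ≠ i) : alphaV i m = 0 := by simp [alphaV, h]

lemma alphaV_ne_alphaV {i j : I} (hij : i ≠ j) : alphaV i ≠ alphaV j := fun h => by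
  simpa [alphaV_self, alphaV_of_ne hij] using congrFun h i

lemma mem_coneIJ_iff {i j : I} (hij : i ≠ j) {s : Set (I → ℤ)} {v : I → ℤ} :
    v ∈ coneIJ s i j ↔ v ∈ s ∧ 0 ≤ v i ∧ 0 ≤ v j ∧ EqOn v 0 {i, j}ᶜ := by
  constructor
  · rintro ⟨hv, p, q, rfl⟩
    refine ⟨hv, by simp [alphaV, hij], by simp [alphaV, hij.symm], fun m hm => ?_⟩
    simp only [mem_compl_iff, mem_insert_iff, mem_singleton_iff, not_or] at hm
    simp [alphaV, hm.1, hm.2]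
  · rintro ⟨hv, hi, hj, hoff⟩
    refine ⟨hv, (v i).toNat, (v j).toNat, funext fun m => ?_⟩
    by_cases hmi : m = i
    · subst hmi
      simp [alphaV, hij, Int.toNat_of_nonneg hi]
    by_cases hmj : m = j
    · subst hmj
      simp [alphaV, hij.symm, Int.toNat_of_nonneg hj]
    simp [alphaV, hmi, hmj, hoff (by simp [hmi, hmj] : m ∈ ({i, j} : Set I)ᶜ)]

lemma coneIJ_comm (s : Set (I → ℤ)) (i j : I) : coneIJ s i j = coneIJ s j i := by
  ext v
  constructor <;> rintro ⟨hv, p, q, rfl⟩ <;> exact ⟨hv, q, p, add_comm _ _⟩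

variable [Fintype I] {ρ : I → A → A} {c : A → I → I → ℤ} {R : A → Set (I → ℤ)}

lemma reflMap_apply_of_ne (x : A) {k m : I} (v : I → ℤ) (h : m ≠ k) :
    reflMap c x k v m = v m := by
  simp [reflMap, alphaV_of_ne h]

lemma reflMap_apply_self (x : A) (k : I) (v : I → ℤ) :
    reflMap c x k v k = v k - ∑ n, c x k n * v n := by
  simp [reflMap, alphaV_self]

lemma sum_mul_alphaV (f : I → ℤ) (m : I) : ∑ n, f n * alphaV m n = f m := by
  simp [alphaV]

lemma sum_mul_eq_of_eqOn {i j : I} (hij : i ≠ j) (f : I → ℤ) {v w : I → ℤ}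
    (h : EqOn v w {i, j}ᶜ) :
    ∑ n, f n * v n = ∑ n, f n * w n + f i * (v i - w i) + f j * (v j - w j) := by
  have hsupp : ∑ n, f n * (v n - w n) = ∑ n ∈ {i, j}, f n * (v n - w n) := by
    refine (Finset.sum_subset (Finset.subset_univ _) fun m _ hm => ?_).symm
    rw [h (by simpa using hm), sub_self, mul_zero]
  rw [Finset.sum_pair hij] at hsupp
  simp only [mul_sub, Finset.sum_sub_distrib] at hsupp
  linarith

lemma reflMap_reflMap {x : A} {k : I} (h : c x k k = 2) (v : I → ℤ) :
    reflMap c x k (reflMap c x k v) = v := by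
  funext m
  by_cases hm : m = k
  · subst hm
    have hsum : ∑ n, c x m n * reflMap c x m v n = -∑ n, c x m n * v n := by
      simp only [reflMap, Pi.sub_apply, Pi.smul_apply, smul_eq_mul, mul_sub,
        Finset.sum_sub_distrib, mul_left_comm _ (∑ n, c x m n * v n), ← Finset.mul_sum,
        sum_mul_alphaV, h]
      ring
    rw [reflMap_apply_self, hsum, reflMap_apply_self]
    ring
  · rw [reflMap_apply_of_ne x _ hm, reflMap_apply_of_ne x _ hm]

lemma eqOn_reflMap (x : A) (k : I) (v : I → ℤ) {s : Set I} (hk : k ∉ s) :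
    EqOn (reflMap c x k v) v s :=
  fun _ hm => reflMap_apply_of_ne x v (ne_of_mem_of_not_mem hm hk)

lemma reflMap_mem (hRS : IsRootSystem ρ c R) {x : A} (k : I) {v : I → ℤ} (hv : v ∈ R x) :
    reflMap c x k v ∈ R (ρ k x) :=
  hRS.R3 x k ▸ mem_image_of_mem _ hv

lemma alphaV_mem (hRS : IsRootSystem ρ c R) (x : A) (k : I) : alphaV k ∈ R x :=
  (hRS.R2 x k).symm.subset (mem_insert _ _) |>.1

lemma nonneg_of_mem_of_pos (hRS : IsRootSystem ρ c R) {x : A} {v : I → ℤ} (hv : v ∈ R x)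
    {m : I} (hm : 0 < v m) (n : I) : 0 ≤ v n := by
  rw [hRS.R1 x] at hv
  rcases hv with hv | hv
  · exact hv.2 n
  · have := hv.2 m
    simp only [Pi.neg_apply, Left.nonneg_neg_iff] at this
    omega

lemma alphaV_mem_coneIJ_left (hRS : IsRootSystem ρ c R) (x : A) (i j : I) :
    alphaV i ∈ coneIJ (R x) i j :=
  ⟨alphaV_mem hRS x i, 1, 0, by simp⟩

lemma alphaV_mem_coneIJ_right (hRS : IsRootSystem ρ c R) (x : A) (i j : I) :
    alphaV j ∈ coneIJ (R x) i j :=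
  coneIJ_comm (R x) i j ▸ alphaV_mem_coneIJ_left hRS x j i

lemma eq_alphaV_of_mem_coneIJ (hRS : IsRootSystem ρ c R) {i j : I} (hij : i ≠ j) {x : A}
    {v : I → ℤ} (hv : v ∈ coneIJ (R x) i j) (hj : v j = 0) : v = alphaV i := by
  obtain ⟨hvR, hi, -, hoff⟩ := (mem_coneIJ_iff hij).mp hv
  have hline : v ∈ R x ∩ {w | ∃ z : ℤ, w = z • alphaV i} := by
    refine ⟨hvR, v i, funext fun m => ?_⟩
    by_cases hmi : m = i
    · simp [hmi, alphaV_self]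
    by_cases hmj : m = j
    · simp [hmj, hj, alphaV_of_ne (Ne.symm hij)]
    simp [alphaV_of_ne hmi, hoff (by simp [hmi, hmj] : m ∈ ({i, j} : Set I)ᶜ)]
  rw [hRS.R2] at hline
  rcases hline with h | h
  · exact h
  · have := congrFun h i
    simp only [Pi.neg_apply, alphaV_self] at this
    omega

lemma mem_coneIJ_diff_iff (hRS : IsRootSystem ρ c R) {i j : I} (hij : i ≠ j) {x : A}
    {v : I → ℤ} :
    v ∈ coneIJ (R x) i j \ {alphaV i} ↔ v ∈ R x ∧ 0 < v j ∧ EqOn v 0 {i, j}ᶜ := by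
  constructor
  · rintro ⟨hv, hne⟩
    obtain ⟨hvR, -, hj, hoff⟩ := (mem_coneIJ_iff hij).mp hv
    exact ⟨hvR, hj.lt_of_ne fun h => hne (eq_alphaV_of_mem_coneIJ hRS hij hv h.symm), hoff⟩
  · rintro ⟨hvR, hj, hoff⟩
    refine ⟨(mem_coneIJ_iff hij).mpr ⟨hvR, nonneg_of_mem_of_pos hRS hvR hj i, hj.le, hoff⟩,
      fun h => ?_⟩
    rw [mem_singleton_iff.mp h, alphaV_of_ne (Ne.symm hij)] at hj
    exact hj.false

lemma image_reflMap_coneIJ_diff (hRS : IsRootSystem ρ c R) {i j : I} (hij : i ≠ j) (x : A) :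
    reflMap c x i '' (coneIJ (R x) i j \ {alphaV i}) = coneIJ (R (ρ i x)) i j \ {alphaV i} := by
  have hfix : ∀ v : I → ℤ, EqOn (reflMap c x i v) v {i}ᶜ := fun v =>
    eqOn_reflMap x i v (notMem_compl_iff.mpr rfl)
  have hj : j ∈ ({i} : Set I)ᶜ := Ne.symm hij
  have hoff : ({i, j} : Set I)ᶜ ⊆ {i}ᶜ := compl_subset_compl.mpr (by simp)
  ext w
  simp only [mem_image, mem_coneIJ_diff_iff hRS hij]
  constructor
  · rintro ⟨v, ⟨hvR, hvj, hv0⟩, rfl⟩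
    exact ⟨reflMap_mem hRS i hvR, hfix v hj ▸ hvj, ((hfix v).mono hoff).trans hv0⟩
  · rintro ⟨hwR, hwj, hw0⟩
    obtain ⟨v, hvR, rfl⟩ := (hRS.R3 x i).symm.subset hwR
    exact ⟨v, ⟨hvR, hfix v hj ▸ hwj, ((hfix v).mono hoff).symm.trans hw0⟩, rfl⟩

lemma ncard_coneIJ_rho_left (hCS : IsCartanScheme ρ c) (hRS : IsRootSystem ρ c R) {i j : I}
    (hij : i ≠ j) (x : A) : (coneIJ (R (ρ i x)) i j).ncard = (coneIJ (R x) i j).ncard := by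
  have hinj : InjOn (reflMap c x i) (coneIJ (R x) i j \ {alphaV i}) :=
    (Function.LeftInverse.injective (reflMap_reflMap (hCS.M1diag x i))).injOn
  rw [ncard_def, ncard_def, ← encard_sdiff_singleton_add_one (alphaV_mem_coneIJ_left hRS _ i j),
    ← image_reflMap_coneIJ_diff hRS hij, hinj.encard_image,
    encard_sdiff_singleton_add_one (alphaV_mem_coneIJ_left hRS _ i j)]

lemma ncard_coneIJ_rho_right (hCS : IsCartanScheme ρ c) (hRS : IsRootSystem ρ c R) {i j : I}
    (hij : i ≠ j) (x : A) : (coneIJ (R (ρ j x)) i j).ncard = (coneIJ (R x) i j).ncard := by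
  rw [coneIJ_comm, coneIJ_comm (R x)]
  exact ncard_coneIJ_rho_left hCS hRS hij.symm x

lemma ncard_coneIJ_self_le_one (hRS : IsRootSystem ρ c R) (x : A) (i : I) :
    (coneIJ (R x) i i).ncard ≤ 1 := by
  suffices coneIJ (R x) i i ⊆ {alphaV i} from
    (ncard_le_ncard this (finite_singleton _)).trans_eq (ncard_singleton _)
  rintro v ⟨hv, p, q, rfl⟩
  have hline : (p : ℤ) • alphaV i + (q : ℤ) • alphaV i ∈ R x ∩ {w | ∃ z : ℤ, w = z • alphaV i} :=
    ⟨hv, p + q, (add_smul _ _ _).symm⟩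
  rw [hRS.R2] at hline
  rcases hline with h | h
  · exact h
  · have := congrFun h i
    simp [alphaV_self] at this
    omega

lemma sub_smul_alphaV_mem_coneIJ (hCS : IsCartanScheme ρ c) (hRS : IsRootSystem ρ c R)
    {i j : I} (hij : i ≠ j) (x : A) : alphaV j - c x i j • alphaV i ∈ coneIJ (R x) i j := by
  have hrefl : reflMap c (ρ i x) i (alphaV j) = alphaV j - c x i j • alphaV i := by
    simp [reflMap, sum_mul_alphaV, ← hCS.C2]
  have hmem := reflMap_mem hRS i (alphaV_mem hRS (ρ i x) j)
  rw [hCS.C1, hrefl] at hmem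
  have hc : 0 ≤ -c x i j := neg_nonneg.mpr (hCS.M1off x i j hij)
  refine ⟨hmem, (-c x i j).toNat, 1, ?_⟩
  rw [Int.toNat_of_nonneg hc, neg_smul, Nat.cast_one, one_smul, sub_eq_add_neg, add_comm]

lemma coneIJ_subset_pair_of_cartan_eq_zero (hCS : IsCartanScheme ρ c) (hRS : IsRootSystem ρ c R)
    {i j : I} (hij : i ≠ j) {x : A} (h0 : c x i j = 0) :
    coneIJ (R x) i j ⊆ {alphaV i, alphaV j} := by
  intro v hv
  by_cases hvi : v = alphaV i
  · exact Or.inl hvi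
  have hw : reflMap c x i v ∈ coneIJ (R (ρ i x)) i j \ {alphaV i} :=
    image_reflMap_coneIJ_diff hRS hij x ▸ mem_image_of_mem _ ⟨hv, hvi⟩
  obtain ⟨-, hvi0, -, hv0⟩ := (mem_coneIJ_iff hij).mp hv
  have hwi : 0 ≤ reflMap c x i v i := ((mem_coneIJ_iff hij).mp hw.1).2.1
  rw [reflMap_apply_self, sum_mul_eq_of_eqOn hij _ hv0, h0, hCS.M1diag] at hwi
  simp only [Pi.zero_apply, mul_zero, Finset.sum_const_zero, sub_zero, zero_mul] at hwi
  exact Or.inr (eq_alphaV_of_mem_coneIJ hRS hij.symm (coneIJ_comm (R x) i j ▸ hv) (by omega))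

lemma cartan_eq_neg_one_of_ncard_coneIJ_eq_three (hCS : IsCartanScheme ρ c)
    (hRS : IsRootSystem ρ c R) {i j : I} (hij : i ≠ j) {x : A}
    (h3 : (coneIJ (R x) i j).ncard = 3) : c x i j = -1 ∧ c x j i = -1 := by
  have hne : ∀ {k m : I}, k ≠ m → (coneIJ (R x) k m).ncard = 3 → c x k m ≠ 0 := by
    intro k m hkm h3 h0
    have := ncard_le_ncard (coneIJ_subset_pair_of_cartan_eq_zero hCS hRS hkm h0)
    rw [h3, ncard_pair (alphaV_ne_alphaV hkm)] at this
    omega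
  have hij0 := hne hij h3
  have hji0 := hne hij.symm (coneIJ_comm (R x) i j ▸ h3)
  set u := alphaV j - c x i j • alphaV i
  set w := alphaV i - c x j i • alphaV j
  have hu : u ∈ coneIJ (R x) i j := sub_smul_alphaV_mem_coneIJ hCS hRS hij x
  have hw : w ∈ coneIJ (R x) i j :=
    coneIJ_comm (R x) j i ▸ sub_smul_alphaV_mem_coneIJ hCS hRS hij.symm x
  have hui : u i = -c x i j := by simp [u, alphaV, hij]
  have huj : u j = 1 := by simp [u, alphaV, hij.symm]
  have hwi : w i = 1 := by simp [w, alphaV, hij]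
  have hwj : w j = -c x j i := by simp [w, alphaV, hij.symm]
  have hcone : {alphaV i, alphaV j, u} = coneIJ (R x) i j := by
    refine eq_of_subset_of_ncard_le (by simp [insert_subset_iff, hu,
      alphaV_mem_coneIJ_left hRS x i j, alphaV_mem_coneIJ_right hRS x i j]) ?_
      (finite_of_ncard_pos (by omega))
    rw [h3, ncard_eq_three.mpr ⟨_, _, _, alphaV_ne_alphaV hij, ?_, ?_, rfl⟩]
    · intro h; simp [← h, alphaV_of_ne (Ne.symm hij)] at huj
    · intro h; apply hij0; simpa [← h, alphaV_of_ne hij] using hui.symm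
  rw [← hcone] at hw
  rcases hw with h | h | h
  · exact absurd (by simpa [h, alphaV_of_ne (Ne.symm hij)] using hwj.symm) hji0
  · simp [h, alphaV_of_ne hij] at hwi
  · have hi := congrFun h i
    have hj := congrFun h j
    constructor <;> omega

lemma reflMap_reflMap_apply_of_eqOn (hCS : IsCartanScheme ρ c) {i j l : I} (hij : i ≠ j)
    (hli : l ≠ i) (hlj : l ≠ j) {x y : A} (hx : c x i j = -1) (hy : c y j i = -1) {v : I → ℤ}
    (hv : EqOn v (alphaV l) {i, j}ᶜ) :
    reflMap c y j (reflMap c x i v) j = -c y j l - c x i l - v i := by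
  have hsum : ∀ z k (w : I → ℤ), EqOn w (alphaV l) {i, j}ᶜ →
      ∑ n, c z k n * w n = c z k l + c z k i * w i + c z k j * w j := by
    intro z k w hw
    rw [sum_mul_eq_of_eqOn hij _ hw, sum_mul_alphaV, alphaV_of_ne (Ne.symm hli),
      alphaV_of_ne (Ne.symm hlj)]
    ring
  have hw : EqOn (reflMap c x i v) (alphaV l) {i, j}ᶜ :=
    (eqOn_reflMap x i v (by simp)).trans hv
  rw [reflMap_apply_self, hsum _ _ _ hw, reflMap_apply_of_ne _ _ (Ne.symm hij),
    reflMap_apply_self, hsum _ _ _ hv, hCS.M1diag, hCS.M1diag, hx, hy]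
  ring

variable (ρ c) in
def reflMapIJI (x : A) (i j : I) : (I → ℤ) → I → ℤ :=
  reflMap c (ρ j (ρ i x)) i ∘ reflMap c (ρ i x) j ∘ reflMap c x i

lemma image_reflMapIJI (hRS : IsRootSystem ρ c R) (x : A) (i j : I) :
    reflMapIJI ρ c x i j '' R x = R (ρ i (ρ j (ρ i x))) := by
  simp only [reflMapIJI, image_comp, hRS.R3]

lemma eqOn_reflMapIJI (x : A) (i j : I) (v : I → ℤ) :
    EqOn (reflMapIJI ρ c x i j v) v {i, j}ᶜ :=
  ((eqOn_reflMap _ i _ (by simp)).trans (eqOn_reflMap _ j _ (by simp))).trans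
    (eqOn_reflMap _ i _ (by simp))

lemma reflMapIJI_apply_right (hCS : IsCartanScheme ρ c) {i j l : I} (hij : i ≠ j)
    (hli : l ≠ i) (hlj : l ≠ j) {x : A} (h1 : c x i j = -1) (h2 : c (ρ i x) j i = -1)
    {v : I → ℤ} (hv : EqOn v (alphaV l) {i, j}ᶜ) :
    reflMapIJI ρ c x i j v j = -c (ρ i x) j l - c x i l - v i := by
  rw [reflMapIJI, Function.comp_apply, reflMap_apply_of_ne _ _ (Ne.symm hij)]
  exact reflMap_reflMap_apply_of_eqOn hCS hij hli hlj h1 h2 hv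

lemma reflMapIJI_apply_left (hCS : IsCartanScheme ρ c) {i j l : I} (hij : i ≠ j)
    (hli : l ≠ i) (hlj : l ≠ j) {x : A} (h1 : c (ρ i x) j i = -1)
    (h2 : c (ρ j (ρ i x)) i j = -1) {v : I → ℤ} (hv : EqOn v (alphaV l) {i, j}ᶜ) :
    reflMapIJI ρ c x i j v i = -c (ρ j (ρ i x)) i l - c (ρ i x) j l - v j := by
  have hw : EqOn (reflMap c x i v) (alphaV l) {j, i}ᶜ :=
    (eqOn_reflMap x i v (by simp)).trans (pair_comm i j ▸ hv)
  rw [reflMapIJI, Function.comp_apply, Function.comp_apply,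
    reflMap_reflMap_apply_of_eqOn hCS hij.symm hlj hli h1 h2 hw,
    reflMap_apply_of_ne _ _ (Ne.symm hij)]

lemma exists_nonneg_mem_eqOn_of_image_subset (hRS : IsRootSystem ρ c R) {x : A}
    {F G : (I → ℤ) → I → ℤ} {s : Set I} {l : I} (hl : l ∈ s) (hF : ∀ v, EqOn (F v) v s)
    (hG : ∀ v, EqOn (G v) v s) (hFG : F '' R x ⊆ G '' R x) :
    ∃ z, G z = F (alphaV l) ∧ EqOn z (alphaV l) s ∧ ∀ m, 0 ≤ z m := by
  obtain ⟨z, hzR, hz⟩ := hFG (mem_image_of_mem F (alphaV_mem hRS x l))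
  have hzl : EqOn z (alphaV l) s := (hG z).symm.trans (hz ▸ hF (alphaV l))
  exact ⟨z, hz, hzl, nonneg_of_mem_of_pos hRS hzR (by rw [hzl hl, alphaV_self]; exact one_pos)⟩

lemma cartan_add_eq_of_rho_braid (hCS : IsCartanScheme ρ c) (hRS : IsRootSystem ρ c R)
    {i j l : I} (hij : i ≠ j) (hli : l ≠ i) (hlj : l ≠ j) {a : A} (h1 : c a i j = -1)
    (h2 : c (ρ i a) j i = -1) (h3 : c (ρ j a) i j = -1) (h4 : c (ρ i (ρ j a)) j i = -1)
    (hbraid : ρ i (ρ j (ρ i a)) = ρ j (ρ i (ρ j a))) :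
    c (ρ i a) i l + c (ρ i a) j l = c (ρ i (ρ j a)) i l + c (ρ i (ρ j a)) j l := by
  have hP : ∀ v, EqOn v (alphaV l) {i, j}ᶜ →
      reflMapIJI ρ c a i j v j = -c (ρ i a) j l - c a i l - v i :=
    fun v hv => reflMapIJI_apply_right hCS hij hli hlj h1 h2 hv
  have hQ : ∀ v, EqOn v (alphaV l) {i, j}ᶜ →
      reflMapIJI ρ c a j i v j = -c (ρ i (ρ j a)) j l - c (ρ j a) i l - v i :=
    fun v hv => reflMapIJI_apply_left hCS hij.symm hlj hli h3 h4 (pair_comm i j ▸ hv)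
  have hPQ : reflMapIJI ρ c a i j '' R a = reflMapIJI ρ c a j i '' R a := by
    rw [image_reflMapIJI hRS, image_reflMapIJI hRS, hbraid]
  have hl : l ∈ ({i, j} : Set I)ᶜ := by simp [hli, hlj]
  have hfixP := eqOn_reflMapIJI (ρ := ρ) (c := c) a i j
  have hfixQ : ∀ v, EqOn (reflMapIJI ρ c a j i v) v {i, j}ᶜ :=
    pair_comm i j ▸ eqOn_reflMapIJI a j i
  obtain ⟨z, hz, hzl, hz0⟩ := exists_nonneg_mem_eqOn_of_image_subset hRS hl hfixP hfixQ hPQ.le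
  obtain ⟨u, hu, hul, hu0⟩ := exists_nonneg_mem_eqOn_of_image_subset hRS hl hfixQ hfixP hPQ.ge
  have hαl : alphaV l i = 0 := alphaV_of_ne (Ne.symm hli)
  have ez := congrFun hz j
  have eu := congrFun hu j
  rw [hQ z hzl, hP _ (eqOn_refl _ _), hαl] at ez
  rw [hP u hul, hQ _ (eqOn_refl _ _), hαl] at eu
  rw [← hCS.C2 a i l, ← hCS.C2 (ρ j a) i l]
  linarith [hz0 i, hu0 i]

end CartanScheme

theorem stmt7_general {I A : Type*} [DecidableEq I] [Fintype I]
    (ρ : I → A → A) (c : A → I → I → ℤ) (R : A → Set (I → ℤ))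
    (hCS : IsCartanScheme ρ c) (hRS : IsRootSystem ρ c R)
    (a : A) (i j : I) (hm : (coneIJ (R a) i j).ncard = 3) :
    ∀ l : I, c (ρ i a) i l + c (ρ i a) j l = c (ρ i (ρ j a)) i l + c (ρ i (ρ j a)) j l := by
  intro l
  have hij : i ≠ j := by
    rintro rfl
    have := ncard_coneIJ_self_le_one hRS a i
    omega
  have hm_i := (ncard_coneIJ_rho_left hCS hRS hij a).trans hm
  have hm_j := (ncard_coneIJ_rho_right hCS hRS hij a).trans hm
  have hm_ij := (ncard_coneIJ_rho_left hCS hRS hij (ρ j a)).trans hm_j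
  obtain ⟨hij_a, -⟩ := cartan_eq_neg_one_of_ncard_coneIJ_eq_three hCS hRS hij hm
  obtain ⟨hij_i, hji_i⟩ := cartan_eq_neg_one_of_ncard_coneIJ_eq_three hCS hRS hij hm_i
  obtain ⟨hij_j, -⟩ := cartan_eq_neg_one_of_ncard_coneIJ_eq_three hCS hRS hij hm_j
  obtain ⟨hij_ij, hji_ij⟩ := cartan_eq_neg_one_of_ncard_coneIJ_eq_three hCS hRS hij hm_ij
  have hbraid : ρ i (ρ j (ρ i a)) = ρ j (ρ i (ρ j a)) :=
    rho_braid_of_iterate_eq_self hCS.C1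
      (hm ▸ hRS.R4 a i j hij (finite_of_ncard_pos (by omega)))
  by_cases hli : l = i
  · subst hli
    rw [hCS.M1diag, hCS.M1diag, hji_i, hji_ij]
  by_cases hlj : l = j
  · subst hlj
    rw [hCS.M1diag, hCS.M1diag, hij_i, hij_ij]
  exact cartan_add_eq_of_rho_braid hCS hRS hij hli hlj hij_a hji_i hij_j hji_ij hbraid

/-- if `m_{i,j}^a = 3` then
`c^{ρ_i(a)}_{il} + c^{ρ_i(a)}_{jl} = c^{ρ_iρ_j(a)}_{il} + c^{ρ_iρ_j(a)}_{jl}` for all `l`. -/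
theorem stmt7 {I A : Type*} [DecidableEq I] [Fintype I] [Nonempty I] [Nonempty A]
    (ρ : I → A → A) (c : A → I → I → ℤ) (R : A → Set (I → ℤ))
    (hCS : IsCartanScheme ρ c) (hRS : IsRootSystem ρ c R)
    (a : A) (i j : I) (hm : (coneIJ (R a) i j).ncard = 3) :
    ∀ l : I, c (ρ i a) i l + c (ρ i a) j l = c (ρ i (ρ j a)) i l + c (ρ i (ρ j a)) j l :=
  stmt7_general ρ c R hCS hRS a i j hm
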